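/- arXiv:2211.09850 — 3 statements merged into one kernel-verified Lean document; each statement's English description precedes it below -/
import Mathlib

section
/- Let Λ be a finite set, let μ₁, μ₂, μ₃, μ₄ : Λ → [0,1] be probability distributions satisfying (1/2)μ₁ + (1/2)μ₃ = (1/2)μ₂ + (1/2)μ₄, and let ξ, ξ' : Λ → [−1,1] be arbitrary response functions. Define mᵢ = Σ_λ ξ(λ)μᵢ(λ) and m'ᵢ = Σ_λ ξ'(λ)μᵢ(λ). If m₁ = m₂ = −m₃ = −m₄ and m'₁ = −m'₂ = −m'₃ = m'₄, then |m₁| + |m'₁| ≤ 1. -/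
open Finset

theorem noncontextual_predictability_tradeoff
    {Λ : Type*} [Fintype Λ]
    (μ₁ μ₂ μ₃ μ₄ : Λ → ℝ)
    (hμ₁ : (∀ lam, 0 ≤ μ₁ lam) ∧ ∑ lam, μ₁ lam = 1)
    (hμ₂ : (∀ lam, 0 ≤ μ₂ lam) ∧ ∑ lam, μ₂ lam = 1)
    (hμ₃ : (∀ lam, 0 ≤ μ₃ lam) ∧ ∑ lam, μ₃ lam = 1)
    (hμ₄ : (∀ lam, 0 ≤ μ₄ lam) ∧ ∑ lam, μ₄ lam = 1)
    (hmix : ∀ lam, (1 / 2) * μ₁ lam + (1 / 2) * μ₃ lam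
                 = (1 / 2) * μ₂ lam + (1 / 2) * μ₄ lam)
    (ξ ξ' : Λ → ℝ)
    (hξ : ∀ lam, ξ lam ∈ Set.Icc (-1 : ℝ) 1)
    (hξ' : ∀ lam, ξ' lam ∈ Set.Icc (-1 : ℝ) 1)
    (m : Fin 4 → ℝ) (m' : Fin 4 → ℝ)
    (hm : m 0 = ∑ lam, ξ lam * μ₁ lam ∧ m 1 = ∑ lam, ξ lam * μ₂ lam ∧
          m 2 = ∑ lam, ξ lam * μ₃ lam ∧ m 3 = ∑ lam, ξ lam * μ₄ lam)
    (hm' : m' 0 = ∑ lam, ξ' lam * μ₁ lam ∧ m' 1 = ∑ lam, ξ' lam * μ₂ lam ∧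
           m' 2 = ∑ lam, ξ' lam * μ₃ lam ∧ m' 3 = ∑ lam, ξ' lam * μ₄ lam)
    (hsym : m 0 = m 1 ∧ m 0 = -m 2 ∧ m 0 = -m 3)
    (hsym' : m' 0 = -m' 1 ∧ m' 0 = -m' 2 ∧ m' 0 = m' 3) :
    |m 0| + |m' 0| ≤ 1 := by
  obtain ⟨hm1, hm2, hm3, hm4⟩ := hm
  obtain ⟨hm'1, hm'2, hm'3, hm'4⟩ := hm'
  set A : Λ → ℝ := fun lam => (μ₁ lam + μ₂ lam) - (μ₃ lam + μ₄ lam) with hA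
  set B : Λ → ℝ := fun lam => (μ₁ lam + μ₄ lam) - (μ₂ lam + μ₃ lam) with hB
  have hsumA : ∑ lam, ξ lam * A lam = 4 * m 0 := by
    have : ∑ lam, ξ lam * A lam
        = (∑ lam, ξ lam * μ₁ lam) + (∑ lam, ξ lam * μ₂ lam)
          - (∑ lam, ξ lam * μ₃ lam) - (∑ lam, ξ lam * μ₄ lam) := by
      rw [← Finset.sum_add_distrib, ← Finset.sum_sub_distrib, ← Finset.sum_sub_distrib]
      apply Finset.sum_congr rfl
      intro lam _
      simp [hA]; ring
    rw [this, ← hm1, ← hm2, ← hm3, ← hm4]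
    linarith [hsym.1, hsym.2.1, hsym.2.2]
  have hsumB : ∑ lam, ξ' lam * B lam = 4 * m' 0 := by
    have : ∑ lam, ξ' lam * B lam
        = (∑ lam, ξ' lam * μ₁ lam) + (∑ lam, ξ' lam * μ₄ lam)
          - (∑ lam, ξ' lam * μ₂ lam) - (∑ lam, ξ' lam * μ₃ lam) := by
      rw [← Finset.sum_add_distrib, ← Finset.sum_sub_distrib, ← Finset.sum_sub_distrib]
      apply Finset.sum_congr rfl
      intro lam _
      simp [hB]; ring
    rw [this, ← hm'1, ← hm'2, ← hm'3, ← hm'4]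
    linarith [hsym'.1, hsym'.2.1, hsym'.2.2]
  have key : ∀ ε ε' : ℝ, |ε| = 1 → |ε'| = 1 →
      ε * (4 * m 0) + ε' * (4 * m' 0) ≤ 4 := by
    intro ε ε' hε hε'
    rw [← hsumA, ← hsumB, Finset.mul_sum, Finset.mul_sum, ← Finset.sum_add_distrib]
    have hbound : ∀ lam : Λ, ε * (ξ lam * A lam) + ε' * (ξ' lam * B lam)
        ≤ 2 * (μ₁ lam + μ₃ lam) := by
      intro lam
      have hAB : |A lam| + |B lam| ≤ 2 * (μ₁ lam + μ₃ lam) := by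
        have hmx := hmix lam
        have h1 := hμ₁.1 lam; have h2 := hμ₂.1 lam
        have h3 := hμ₃.1 lam; have h4 := hμ₄.1 lam
        rcases abs_cases (A lam) with ⟨ha, _⟩ | ⟨ha, _⟩ <;>
          rcases abs_cases (B lam) with ⟨hb, _⟩ | ⟨hb, _⟩ <;>
          rw [ha, hb] <;> simp only [hA, hB] <;> linarith
      have h1 : ε * (ξ lam * A lam) ≤ |A lam| := by
        calc ε * (ξ lam * A lam) ≤ |ε * (ξ lam * A lam)| := le_abs_self _
          _ = |ε| * |ξ lam| * |A lam| := by rw [abs_mul, abs_mul, mul_assoc]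
          _ ≤ 1 * 1 * |A lam| := by
              have := abs_le.mpr ⟨(hξ lam).1, (hξ lam).2⟩
              rw [hε]
              gcongr
          _ = |A lam| := by ring
      have h2 : ε' * (ξ' lam * B lam) ≤ |B lam| := by
        calc ε' * (ξ' lam * B lam) ≤ |ε' * (ξ' lam * B lam)| := le_abs_self _
          _ = |ε'| * |ξ' lam| * |B lam| := by rw [abs_mul, abs_mul, mul_assoc]
          _ ≤ 1 * 1 * |B lam| := by
              have := abs_le.mpr ⟨(hξ' lam).1, (hξ' lam).2⟩
              rw [hε']
              gcongr
          _ = |B lam| := by ring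
      linarith
    calc ∑ lam, (ε * (ξ lam * A lam) + ε' * (ξ' lam * B lam))
        ≤ ∑ lam, 2 * (μ₁ lam + μ₃ lam) :=
          Finset.sum_le_sum fun lam _ => hbound lam
      _ = 4 := by
          rw [← Finset.mul_sum, Finset.sum_add_distrib, hμ₁.2, hμ₃.2]; norm_num
  have k1 := key 1 1 (by norm_num) (by norm_num)
  have k2 := key 1 (-1) (by norm_num) (by norm_num)
  have k3 := key (-1) 1 (by norm_num) (by norm_num)
  have k4 := key (-1) (-1) (by norm_num) (by norm_num)
  rcases abs_cases (m 0) with ⟨h, _⟩ | ⟨h, _⟩ <;>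
    rcases abs_cases (m' 0) with ⟨h', _⟩ | ⟨h', _⟩ <;> rw [h, h'] <;> linarith
end

section
/- Let Λ be a finite set and ξ, ξ' : Λ → [−1,1]. Suppose ν is a probability distribution on Λ such that Σ_λ ξ(λ)ν(λ) = 0 and Σ_λ ξ'(λ)ν(λ) = 0, and suppose ν = (1/2)μ₁ + (1/2)μ₃ where μ₁, μ₃ are probability distributions with Σ_λ ξ(λ)μ₁(λ) = −Σ_λ ξ(λ)μ₃(λ) = a and Σ_λ ξ'(λ)μ₁(λ) = −Σ_λ ξ'(λ)μ₃(λ) = b. Then |a| + |b| ≤ 1 need not hold in general; however if additionally ν = (1/2)μ₂ + (1/2)μ₄ with Σ_λ ξ(λ)μ₂(λ) = a, Σ_λ ξ'(λ)μ₂(λ) = −b, Σ_λ ξ(λ)μ₄(λ) = −a, Σ_λ ξ'(λ)μ₄(λ) = b, then |a| + |b| ≤ 1 does hold. -/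
/-- A probability distribution on `Fin n`. -/
def IsProb {n : ℕ} (μ : Fin n → ℝ) : Prop := (∀ lam, 0 ≤ μ lam) ∧ ∑ lam, μ lam = 1

lemma pointwise_bound (x y p q v : ℝ) (hx : -1 ≤ x) (hx' : x ≤ 1)
    (hy : -1 ≤ y) (hy' : y ≤ 1) (hp : 0 ≤ p) (hq : 0 ≤ q)
    (hp' : p ≤ 2 * v) (hq' : q ≤ 2 * v) :
    x * (p + q - 2 * v) + y * (p - q) ≤ 2 * v := by
  have hs : x * (p + q - 2 * v) ≤ |p + q - 2 * v| := by
    calc x * (p + q - 2 * v) ≤ |x * (p + q - 2 * v)| := le_abs_self _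
    _ = |x| * |p + q - 2 * v| := abs_mul _ _
    _ ≤ 1 * |p + q - 2 * v| := mul_le_mul_of_nonneg_right (abs_le.mpr ⟨hx, hx'⟩) (abs_nonneg _)
    _ = |p + q - 2 * v| := one_mul _
  have ht : y * (p - q) ≤ |p - q| := by
    calc y * (p - q) ≤ |y * (p - q)| := le_abs_self _
    _ = |y| * |p - q| := abs_mul _ _
    _ ≤ 1 * |p - q| := mul_le_mul_of_nonneg_right (abs_le.mpr ⟨hy, hy'⟩) (abs_nonneg _)
    _ = |p - q| := one_mul _
  have : |p + q - 2 * v| + |p - q| ≤ 2 * v := by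
    rcases abs_cases (p + q - 2 * v) with ⟨e1, _⟩ | ⟨e1, _⟩ <;>
      rcases abs_cases (p - q) with ⟨e2, _⟩ | ⟨e2, _⟩ <;> rw [e1, e2] <;> linarith
  linarith

lemma sum_expand {n : ℕ} (ξ ξ' ν μ μ' : Fin n → ℝ) :
    ∑ l, (ξ l * (μ l + μ' l - 2 * ν l) + ξ' l * (μ l - μ' l))
    = (∑ l, ξ l * μ l) + (∑ l, ξ l * μ' l) - 2 * (∑ l, ξ l * ν l)
      + ((∑ l, ξ' l * μ l) - (∑ l, ξ' l * μ' l)) := by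
  simp only [Finset.sum_add_distrib, Finset.sum_sub_distrib, Finset.mul_sum, mul_add, mul_sub,
    mul_left_comm]

lemma key_bound {n : ℕ} (ξ ξ' ν μ μ' : Fin n → ℝ)
    (hξ : ∀ l, ξ l ∈ Set.Icc (-1 : ℝ) 1) (hξ' : ∀ l, ξ' l ∈ Set.Icc (-1 : ℝ) 1)
    (hνs : ∑ l, ν l = 1)
    (hμ0 : ∀ l, 0 ≤ μ l) (hμ'0 : ∀ l, 0 ≤ μ' l)
    (hμ : ∀ l, μ l ≤ 2 * ν l) (hμ' : ∀ l, μ' l ≤ 2 * ν l) :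
    ∑ l, (ξ l * (μ l + μ' l - 2 * ν l) + ξ' l * (μ l - μ' l)) ≤ 2 := by
  calc ∑ l, (ξ l * (μ l + μ' l - 2 * ν l) + ξ' l * (μ l - μ' l)) ≤ ∑ l, 2 * ν l :=
        Finset.sum_le_sum fun l _ => pointwise_bound _ _ _ _ _ (hξ l).1 (hξ l).2
          (hξ' l).1 (hξ' l).2 (hμ0 l) (hμ'0 l) (hμ l) (hμ' l)
    _ = 2 := by rw [← Finset.mul_sum, hνs, mul_one]

theorem two_states_insufficient_but_full_orbit_suffices :
    -- two states with opposite expectation values do NOT suffice for |a| + |b| ≤ 1: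
    (∃ (n : ℕ) (ξ ξ' ν μ₁ μ₃ : Fin n → ℝ) (a b : ℝ),
      (∀ lam, ξ lam ∈ Set.Icc (-1 : ℝ) 1) ∧ (∀ lam, ξ' lam ∈ Set.Icc (-1 : ℝ) 1) ∧
      IsProb ν ∧ IsProb μ₁ ∧ IsProb μ₃ ∧
      (∑ lam, ξ lam * ν lam = 0) ∧ (∑ lam, ξ' lam * ν lam = 0) ∧
      (∀ lam, ν lam = (1 / 2) * μ₁ lam + (1 / 2) * μ₃ lam) ∧
      (∑ lam, ξ lam * μ₁ lam = a) ∧ (∑ lam, ξ lam * μ₃ lam = -a) ∧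
      (∑ lam, ξ' lam * μ₁ lam = b) ∧ (∑ lam, ξ' lam * μ₃ lam = -b) ∧
      1 < |a| + |b|) ∧
    -- but the full A₁²-orbit of four states does:
    (∀ (n : ℕ) (ξ ξ' ν μ₁ μ₂ μ₃ μ₄ : Fin n → ℝ) (a b : ℝ),
      (∀ lam, ξ lam ∈ Set.Icc (-1 : ℝ) 1) → (∀ lam, ξ' lam ∈ Set.Icc (-1 : ℝ) 1) →
      IsProb ν → IsProb μ₁ → IsProb μ₂ → IsProb μ₃ → IsProb μ₄ →
      (∑ lam, ξ lam * ν lam = 0) → (∑ lam, ξ' lam * ν lam = 0) →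
      (∀ lam, ν lam = (1 / 2) * μ₁ lam + (1 / 2) * μ₃ lam) →
      (∀ lam, ν lam = (1 / 2) * μ₂ lam + (1 / 2) * μ₄ lam) →
      (∑ lam, ξ lam * μ₁ lam = a) → (∑ lam, ξ lam * μ₃ lam = -a) →
      (∑ lam, ξ' lam * μ₁ lam = b) → (∑ lam, ξ' lam * μ₃ lam = -b) →
      (∑ lam, ξ lam * μ₂ lam = a) → (∑ lam, ξ' lam * μ₂ lam = -b) →
      (∑ lam, ξ lam * μ₄ lam = -a) → (∑ lam, ξ' lam * μ₄ lam = b) →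
      |a| + |b| ≤ 1) := by
  constructor
  · -- counterexample: n = 2, ξ = ξ' = (1, -1), μ₁ = δ₀, μ₃ = δ₁, ν uniform, a = b = 1
    refine ⟨2, ![1, -1], ![1, -1], ![1/2, 1/2], ![1, 0], ![0, 1], 1, 1, ?_, ?_, ?_, ?_, ?_,
      ?_, ?_, ?_, ?_, ?_, ?_, ?_, ?_⟩
    · intro lam; fin_cases lam <;> norm_num
    · intro lam; fin_cases lam <;> norm_num
    · exact ⟨fun lam => by fin_cases lam <;> norm_num, by norm_num [Fin.sum_univ_two]⟩
    · exact ⟨fun lam => by fin_cases lam <;> norm_num, by simp [Fin.sum_univ_two]⟩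
    · exact ⟨fun lam => by fin_cases lam <;> norm_num, by simp [Fin.sum_univ_two]⟩
    · norm_num [Fin.sum_univ_two]
    · norm_num [Fin.sum_univ_two]
    · intro lam; fin_cases lam <;> norm_num
    · norm_num [Fin.sum_univ_two]
    · norm_num [Fin.sum_univ_two]
    · norm_num [Fin.sum_univ_two]
    · norm_num [Fin.sum_univ_two]
    · norm_num
  · intro n ξ ξ' ν μ₁ μ₂ μ₃ μ₄ a b hξ hξ' hν h1 h2 h3 h4 hξν hξ'ν hd13 hd24
      s1 s3 t1 t3 s2 t2 s4 t4
    have hνs : ∑ l, ν l = 1 := hν.2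
    have hm1 : ∀ l, μ₁ l ≤ 2 * ν l := fun l => by have := h3.1 l; have := hd13 l; linarith
    have hm3 : ∀ l, μ₃ l ≤ 2 * ν l := fun l => by have := h1.1 l; have := hd13 l; linarith
    have hm2 : ∀ l, μ₂ l ≤ 2 * ν l := fun l => by have := h4.1 l; have := hd24 l; linarith
    have hm4 : ∀ l, μ₄ l ≤ 2 * ν l := fun l => by have := h2.1 l; have := hd24 l; linarith
    -- a + b ≤ 1, using (μ₁, μ₂)
    have k12 := key_bound ξ ξ' ν μ₁ μ₂ hξ hξ' hνs h1.1 h2.1 hm1 hm2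
    rw [sum_expand, s1, s2, t1, t2, hξν] at k12
    -- a - b ≤ 1, using (μ₂, μ₁)
    have k21 := key_bound ξ ξ' ν μ₂ μ₁ hξ hξ' hνs h2.1 h1.1 hm2 hm1
    rw [sum_expand, s2, s1, t2, t1, hξν] at k21
    -- -a + b ≤ 1, using (μ₄, μ₃)
    have k43 := key_bound ξ ξ' ν μ₄ μ₃ hξ hξ' hνs h4.1 h3.1 hm4 hm3
    rw [sum_expand, s4, s3, t4, t3, hξν] at k43
    -- -a - b ≤ 1, using (μ₃, μ₄)
    have k34 := key_bound ξ ξ' ν μ₃ μ₄ hξ hξ' hνs h3.1 h4.1 hm3 hm4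
    rw [sum_expand, s3, s4, t3, t4, hξν] at k34
    rcases abs_cases a with ⟨ea, _⟩ | ⟨ea, _⟩ <;> rcases abs_cases b with ⟨eb, _⟩ | ⟨eb, _⟩ <;>
      rw [ea, eb] <;> linarith
end

section
/- Suppose M and M' are 2×2 Hermitian matrices with eigenvalues ±1 (i.e., involutions with trace 0, hence of the form M = a·σ, M' = a'·σ for unit vectors a, a' ∈ ℝ³, where σ = (X,Y,Z)). If for every qubit density matrix ρ₁ there exist density matrices ρ₂, ρ₃, ρ₄ with tr(Mρ₁) = tr(Mρ₂) = −tr(Mρ₃) = −tr(Mρ₄), tr(M'ρ₁) = −tr(M'ρ₂) = −tr(M'ρ₃) = tr(M'ρ₄), and (1/2)(ρ₁ + ρ₃) = (1/2)(ρ₂ + ρ₄), then a · a' = 0, i.e., M and M' anticommute. -/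
open Matrix ComplexOrder

/-- A qubit density matrix: positive semidefinite with unit trace. -/
def IsDensityMatrix (ρ : Matrix (Fin 2) (Fin 2) ℂ) : Prop := ρ.PosSemidef ∧ ρ.trace = 1

/-!
The state `ρ₁ = (1 + M)/2` is the projection onto the `+1` eigenspace of `M`, so
`tr(M ρ₁) = 1`. Any density matrix `ρ` with `tr(M ρ) = 1` is annihilated by the
complementary projection `(1 - M)/2`, hence satisfies `M ρ = ρ = ρ M`. For traceless `2 × 2`
matrices the anticommutator `M M' + M' M` is the scalar `c = tr(M M')`, and cycling the trace
then gives `2 tr(M' ρ) = c` for every such `ρ`. The hypothesis provides `ρ₂` with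
`tr(M ρ₂) = tr(M ρ₁) = 1` but `tr(M' ρ₂) = -tr(M' ρ₁)`, so `c = -c`, i.e. `c = 0`.
-/

namespace Matrix

variable {n 𝕜 : Type*} [Fintype n] [DecidableEq n] [RCLike 𝕜]

open scoped MatrixOrder in
theorem PosSemidef.mul_eq_zero_of_trace_mul_eq_zero {A B : Matrix n n 𝕜}
    (hA : A.PosSemidef) (hB : B.PosSemidef) (h : (A * B).trace = 0) : A * B = 0 := by
  obtain ⟨a, rfl⟩ := CStarAlgebra.nonneg_iff_eq_star_mul_self.mp hA.nonneg
  obtain ⟨b, rfl⟩ := CStarAlgebra.nonneg_iff_eq_star_mul_self.mp hB.nonneg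
  have hab : a * star b = 0 := by
    have hgram : (a * star b)ᴴ * (a * star b) = b * (star a * a) * star b := by
      simp [star_eq_conjTranspose, mul_assoc]
    rw [← trace_conjTranspose_mul_self_eq_zero_iff, hgram, trace_mul_cycle, trace_mul_comm, h]
  rw [mul_assoc, ← mul_assoc a, hab, zero_mul, mul_zero]

open scoped MatrixOrder in
theorem isStarProjection_half_smul_one_add {M : Matrix n n 𝕜} (hM : M.IsHermitian)
    (hMinv : M * M = 1) : IsStarProjection ((2⁻¹ : 𝕜) • (1 + M)) where
  isIdempotentElem := by
    have : (1 + M) * (1 + M) = (2 : 𝕜) • (1 + M) := by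
      simp only [two_smul, add_mul, mul_add, one_mul, mul_one, hMinv]; abel
    rw [IsIdempotentElem, smul_mul_smul, this, smul_smul]
    norm_num
  isSelfAdjoint := by
    simp [IsSelfAdjoint, star_eq_conjTranspose, hM.eq]

theorem posSemidef_half_smul_one_add {M : Matrix n n 𝕜} (hM : M.IsHermitian)
    (hMinv : M * M = 1) : ((2⁻¹ : 𝕜) • (1 + M)).PosSemidef := by
  open scoped MatrixOrder in
  exact (isStarProjection_half_smul_one_add hM hMinv).nonneg.posSemidef

theorem mul_eq_self_of_trace_mul_eq_one {M ρ : Matrix n n 𝕜} (hM : M.IsHermitian)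
    (hMinv : M * M = 1) (hρ : ρ.PosSemidef) (hρtr : ρ.trace = 1) (h : (M * ρ).trace = 1) :
    M * ρ = ρ ∧ ρ * M = ρ := by
  have hP : ((2⁻¹ : 𝕜) • (1 - M)).PosSemidef := by
    simpa [sub_eq_add_neg] using posSemidef_half_smul_one_add hM.neg (by simpa using hMinv)
  have hPρ : ((2⁻¹ : 𝕜) • (1 - M)) * ρ = 0 := by
    refine hP.mul_eq_zero_of_trace_mul_eq_zero hρ ?_
    rw [smul_mul, sub_mul, one_mul, trace_smul, trace_sub, hρtr, h, sub_self, smul_zero]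
  have hl : M * ρ = ρ := by
    rw [smul_mul, smul_eq_zero_iff_right (by norm_num), sub_mul, one_mul, sub_eq_zero] at hPρ
    exact hPρ.symm
  refine ⟨hl, ?_⟩
  simpa [hM.eq, hρ.isHermitian.eq] using congrArg conjTranspose hl

variable {R : Type*} [CommRing R]

theorem anticomm_eq_trace_mul_smul_one {A B : Matrix (Fin 2) (Fin 2) R}
    (hA : A.trace = 0) (hB : B.trace = 0) : A * B + B * A = (A * B).trace • 1 := by
  rw [trace_fin_two] at hA hB
  have hA₁₁ : A 1 1 = -A 0 0 := by linear_combination hA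
  have hB₁₁ : B 1 1 = -B 0 0 := by linear_combination hB
  ext i j
  fin_cases i <;> fin_cases j <;> simp [trace_fin_two, mul_apply, hA₁₁, hB₁₁] <;> ring

theorem two_mul_trace_mul_eq_of_anticomm {M M' ρ : Matrix n n R} {c : R}
    (hanti : M * M' + M' * M = c • 1) (hl : M * ρ = ρ) (hr : ρ * M = ρ) :
    2 * (M' * ρ).trace = c * ρ.trace :=
  calc 2 * (M' * ρ).trace = (M * M' * ρ).trace + (M' * M * ρ).trace := by
        rw [trace_mul_cycle, hr, trace_mul_comm ρ, mul_assoc, hl, two_mul]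
    _ = c * ρ.trace := by
        rw [← trace_add, ← add_mul, hanti, smul_mul, one_mul, trace_smul, smul_eq_mul]

end Matrix

open Matrix

theorem exists_isDensityMatrix_trace_mul_eq_one {M : Matrix (Fin 2) (Fin 2) ℂ}
    (hM : M.IsHermitian) (hMinv : M * M = 1) (hMtr : M.trace = 0) :
    ∃ ρ, IsDensityMatrix ρ ∧ (M * ρ).trace = 1 := by
  refine ⟨(2⁻¹ : ℂ) • (1 + M), ⟨posSemidef_half_smul_one_add hM hMinv, ?_⟩, ?_⟩
  · simp [hMtr]
  · simp [mul_add, hMinv, hMtr]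

theorem A1sq_symmetry_forces_anticommutation_general
    (M M' : Matrix (Fin 2) (Fin 2) ℂ)
    (hM : M.IsHermitian)
    (hMinv : M * M = 1)
    (hMtr : M.trace = 0) (hM'tr : M'.trace = 0)
    (horbit : ∀ ρ₁ : Matrix (Fin 2) (Fin 2) ℂ, IsDensityMatrix ρ₁ →
      ∃ ρ₂ ρ₃ ρ₄ : Matrix (Fin 2) (Fin 2) ℂ,
        IsDensityMatrix ρ₂ ∧ IsDensityMatrix ρ₃ ∧ IsDensityMatrix ρ₄ ∧
        (M * ρ₁).trace = (M * ρ₂).trace ∧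
        (M * ρ₁).trace = -(M * ρ₃).trace ∧
        (M * ρ₁).trace = -(M * ρ₄).trace ∧
        (M' * ρ₁).trace = -(M' * ρ₂).trace ∧
        (M' * ρ₁).trace = -(M' * ρ₃).trace ∧
        (M' * ρ₁).trace = (M' * ρ₄).trace ∧
        (1 / 2 : ℂ) • (ρ₁ + ρ₃) = (1 / 2 : ℂ) • (ρ₂ + ρ₄)) :
    M * M' + M' * M = 0 := by
  have hanti := anticomm_eq_trace_mul_smul_one hMtr hM'tr
  have trace_M'_mul : ∀ ρ, IsDensityMatrix ρ → (M * ρ).trace = 1 →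
      2 * (M' * ρ).trace = (M * M').trace := fun ρ ⟨hρ, hρtr⟩ h => by
    obtain ⟨hl, hr⟩ := mul_eq_self_of_trace_mul_eq_one hM hMinv hρ hρtr h
    simpa [hρtr] using two_mul_trace_mul_eq_of_anticomm hanti hl hr
  obtain ⟨ρ₁, hρ₁, hMρ₁⟩ := exists_isDensityMatrix_trace_mul_eq_one hM hMinv hMtr
  obtain ⟨ρ₂, -, -, hρ₂, -, -, hM₁₂, -, -, hM'₁₂, -, -, -⟩ := horbit ρ₁ hρ₁
  have h₁ := trace_M'_mul ρ₁ hρ₁ hMρ₁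
  have h₂ := trace_M'_mul ρ₂ hρ₂ (hM₁₂ ▸ hMρ₁)
  rw [hanti, show (M * M').trace = 0 by linear_combination hM'₁₂ - (h₁ + h₂) / 2, zero_smul]

theorem A1sq_symmetry_forces_anticommutation
    (M M' : Matrix (Fin 2) (Fin 2) ℂ)
    (hM : M.IsHermitian) (hM' : M'.IsHermitian)
    (hMinv : M * M = 1) (hM'inv : M' * M' = 1)
    (hMtr : M.trace = 0) (hM'tr : M'.trace = 0)
    (horbit : ∀ ρ₁ : Matrix (Fin 2) (Fin 2) ℂ, IsDensityMatrix ρ₁ →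
      ∃ ρ₂ ρ₃ ρ₄ : Matrix (Fin 2) (Fin 2) ℂ,
        IsDensityMatrix ρ₂ ∧ IsDensityMatrix ρ₃ ∧ IsDensityMatrix ρ₄ ∧
        (M * ρ₁).trace = (M * ρ₂).trace ∧
        (M * ρ₁).trace = -(M * ρ₃).trace ∧
        (M * ρ₁).trace = -(M * ρ₄).trace ∧
        (M' * ρ₁).trace = -(M' * ρ₂).trace ∧
        (M' * ρ₁).trace = -(M' * ρ₃).trace ∧
        (M' * ρ₁).trace = (M' * ρ₄).trace ∧
        (1 / 2 : ℂ) • (ρ₁ + ρ₃) = (1 / 2 : ℂ) • (ρ₂ + ρ₄)) :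
    M * M' + M' * M = 0 :=
  A1sq_symmetry_forces_anticommutation_general M M' hM hMinv hMtr hM'tr horbit
end
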